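/- arXiv:1001.5185 — 5 statements merged into one kernel-verified Lean document; each statement's English description precedes it below -/
import Mathlib

section
/- Let W be a block positive Hermitian matrix on ℂ^m⊗ℂ^m and let ψ = Σ_{i=1}^m √μ_i a_i⊗b_i be a Schmidt decomposition of a unit vector ψ. If A_{kl}^{(W)}(ψ) ≥ −1 for all k ≠ l, then −⟨ψ, Wψ⟩ ≤ Σ_{i≠j} √(μ_i μ_j). -/
open scoped BigOperators ComplexConjugate ComplexOrder
open Finset Matrix

noncomputable section

/-- Tensor product `a⊗b` of two vectors, `(a⊗b)(x,y) = aₓ·b_y`. -/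
def tp {m n : ℕ} (a : Fin m → ℂ) (b : Fin n → ℂ) : Fin m × Fin n → ℂ :=
  fun p => a p.1 * b p.2

/-- The standard Hermitian inner product `⟨f,g⟩ = ∑ i, conj (f i) * g i`. -/
def hip {ι : Type} [Fintype ι] (f g : ι → ℂ) : ℂ := ∑ i, conj (f i) * g i

/-- An orthonormal family of vectors. -/
def Onb {m r : ℕ} (a : Fin r → Fin m → ℂ) : Prop :=
  ∀ i j, hip (a i) (a j) = if i = j then 1 else 0

/-- `IsSchmidt ψ a b μ` : `ψ = ∑ i, √μᵢ aᵢ⊗bᵢ` is a Schmidt decomposition of `ψ`. -/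
def IsSchmidt {m : ℕ} (ψ : Fin m × Fin m → ℂ)
    (a b : Fin m → Fin m → ℂ) (μ : Fin m → ℝ) : Prop :=
  Onb a ∧ Onb b ∧ (∀ i, 0 ≤ μ i) ∧ ∑ i, μ i = 1 ∧
  ψ = fun p => ∑ i, (Real.sqrt (μ i) : ℂ) * tp (a i) (b i) p

/-- `A_{kl}^{(W)}(ψ) = Re⟨a_k⊗b_k, W(a_l⊗b_l)⟩`. -/
def Acoef {m : ℕ} (W : Matrix (Fin m × Fin m) (Fin m × Fin m) ℂ)
    (a b : Fin m → Fin m → ℂ) (k l : Fin m) : ℝ :=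
  (hip (tp (a k) (b k)) (W.mulVec (tp (a l) (b l)))).re

/-- Block positivity: `⟨a⊗b, W(a⊗b)⟩ ≥ 0` for all `a`, `b`. -/
def BlockPos {m : ℕ} (W : Matrix (Fin m × Fin m) (Fin m × Fin m) ℂ) : Prop :=
  ∀ a b : Fin m → ℂ, 0 ≤ (hip (tp a b) (W.mulVec (tp a b))).re

/-- The reduced matrix `ρ_A` of a vector `ψ`. -/
def rhoA {m n : ℕ} (ψ : Fin m × Fin n → ℂ) : Matrix (Fin m) (Fin m) ℂ :=
  Matrix.of fun x y => ∑ z, ψ (x, z) * conj (ψ (y, z))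

/-- Concurrence of a pure state: `C(ψ) = √(2(1 − Tr ρ_A²))`. -/
def concP {m n : ℕ} (ψ : Fin m × Fin n → ℂ) : ℝ :=
  Real.sqrt (2 * (1 - (Matrix.trace (rhoA ψ * rhoA ψ)).re))

/-- Convex-roof concurrence of a mixed state. -/
def concM {m n : ℕ} (ρ : Matrix (Fin m × Fin n) (Fin m × Fin n) ℂ) : ℝ :=
  sInf { c : ℝ | ∃ (N : ℕ) (p : Fin N → ℝ) (ψ : Fin N → (Fin m × Fin n → ℂ)),
    (∀ i, 0 < p i) ∧ ∑ i, p i = 1 ∧ (∀ i, hip (ψ i) (ψ i) = 1) ∧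
    ρ = ∑ i, (p i : ℂ) • Matrix.of (fun x y => ψ i x * conj (ψ i y)) ∧
    c = ∑ i, p i * concP (ψ i) }

/-!
In the Schmidt basis, `⟨ψ, Wψ⟩` is the real quadratic form `∑ₖₗ √μₖ √μₗ A_{kl}` in the
coefficients `√μₖ ≥ 0`. Block positivity makes every diagonal term nonnegative, and the
hypothesis bounds every off-diagonal term below by `-√(μₖ μₗ)`.
-/

lemma hip_eq_star_dotProduct {ι : Type} [Fintype ι] (f g : ι → ℂ) :
    hip f g = star f ⬝ᵥ g := rfl

lemma re_hip_sum_smul_mulVec_sum_smul {ι κ : Type} [Fintype ι] [Fintype κ]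
    (W : Matrix ι ι ℂ) (c : κ → ℝ) (v : κ → ι → ℂ) :
    (hip (∑ k, (c k : ℂ) • v k) (W *ᵥ ∑ k, (c k : ℂ) • v k)).re
      = ∑ k, ∑ l, c k * c l * (hip (v k) (W *ᵥ v l)).re := by
  simp only [hip_eq_star_dotProduct, star_sum, star_smul, Complex.star_def,
    Complex.conj_ofReal, mulVec_sum, mulVec_smul, sum_dotProduct, dotProduct_sum,
    smul_dotProduct, dotProduct_smul, Complex.re_sum, smul_eq_mul, Complex.re_ofReal_mul,
    Finset.mul_sum]
  rw [Finset.sum_comm]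
  exact Finset.sum_congr rfl fun _ _ => Finset.sum_congr rfl fun _ _ => by ring

lemma IsSchmidt.eq_sum_smul {m : ℕ} {ψ : Fin m × Fin m → ℂ} {a b : Fin m → Fin m → ℂ}
    {μ : Fin m → ℝ} (hS : IsSchmidt ψ a b μ) :
    ψ = ∑ i, (Real.sqrt (μ i) : ℂ) • tp (a i) (b i) := by
  rw [hS.2.2.2.2]
  ext p
  simp [Finset.sum_apply]

lemma neg_sum_offDiag_mul_le_sum_mul_mul {κ : Type} [Fintype κ] [DecidableEq κ]
    (c : κ → ℝ) (A : κ → κ → ℝ) (hc : ∀ k, 0 ≤ c k) (hdiag : ∀ k, 0 ≤ A k k)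
    (hoff : ∀ k l, k ≠ l → -1 ≤ A k l) :
    -∑ k, ∑ l, (if k ≠ l then c k * c l else 0) ≤ ∑ k, ∑ l, c k * c l * A k l := by
  simp only [← Finset.sum_neg_distrib]
  refine Finset.sum_le_sum fun k _ => Finset.sum_le_sum fun l _ => ?_
  by_cases hkl : k = l
  · subst hkl
    simpa using mul_nonneg (mul_nonneg (hc k) (hc k)) (hdiag k)
  · simpa [hkl] using mul_le_mul_of_nonneg_left (hoff k l hkl) (mul_nonneg (hc k) (hc l))

theorem stmt4_general {m : ℕ} (W : Matrix (Fin m × Fin m) (Fin m × Fin m) ℂ)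
    (hBP : BlockPos W)
    (ψ : Fin m × Fin m → ℂ) (a b : Fin m → Fin m → ℂ) (μ : Fin m → ℝ)
    (hS : IsSchmidt ψ a b μ)
    (hA : ∀ k l, k ≠ l → -1 ≤ Acoef W a b k l) :
    -(hip ψ (W.mulVec ψ)).re
      ≤ ∑ i, ∑ j, (if i ≠ j then Real.sqrt (μ i * μ j) else 0) := by
  have hsqrt : ∀ i j, Real.sqrt (μ i * μ j) = Real.sqrt (μ i) * Real.sqrt (μ j) :=
    fun i j => Real.sqrt_mul (hS.2.2.1 i) _
  rw [hS.eq_sum_smul, re_hip_sum_smul_mulVec_sum_smul, neg_le]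
  simp only [hsqrt]
  exact neg_sum_offDiag_mul_le_sum_mul_mul (fun i => Real.sqrt (μ i)) (Acoef W a b)
    (fun _ => Real.sqrt_nonneg _) (fun i => hBP (a i) (b i)) hA

/-- For a block positive Hermitian `W` and a Schmidt decomposition
`ψ = ∑ᵢ √μᵢ aᵢ⊗bᵢ` of a unit vector: if `A_{kl}^{(W)}(ψ) ≥ −1` for all
`k ≠ l`, then `−⟨ψ, Wψ⟩ ≤ ∑_{i≠j} √(μᵢ μⱼ)`. -/
theorem stmt4 {m : ℕ} (W : Matrix (Fin m × Fin m) (Fin m × Fin m) ℂ)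
    (hW : W.IsHermitian) (hBP : BlockPos W)
    (ψ : Fin m × Fin m → ℂ) (a b : Fin m → Fin m → ℂ) (μ : Fin m → ℝ)
    (hunit : hip ψ ψ = 1) (hS : IsSchmidt ψ a b μ)
    (hA : ∀ k l, k ≠ l → -1 ≤ Acoef W a b k l) :
    -(hip ψ (W.mulVec ψ)).re
      ≤ ∑ i, ∑ j, (if i ≠ j then Real.sqrt (μ i * μ j) else 0) :=
  stmt4_general W hBP ψ a b μ hS hA

end
end

section
/- (Main theorem.) Let W be a block positive Hermitian matrix on ℂ^m⊗ℂ^m and let λ > 0 be such that A_{kl}^{(W)}(ψ) ≥ −λ for every unit vector ψ ∈ ℂ^m⊗ℂ^m, every Schmidt decomposition of ψ, and all k ≠ l. Then for every α ≥ λ, the rescaled witness α^{-1}W satisfies the condition −⟨ψ, (α^{-1}W)ψ⟩ ≤ Σ_{i≠j} √(μ_i μ_j) for every unit vector ψ with Schmidt coefficients μ_1,…,μ_m. -/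
/-!
Expanding `ψ = ∑ᵢ √μᵢ aᵢ⊗bᵢ` gives `Re⟨ψ, Wψ⟩ = ∑_{k,l} √μₖ √μₗ A_{kl}`. Block positivity makes the
diagonal terms nonnegative and the hypothesis bounds each off-diagonal term below by `-λ √μₖ √μₗ`,
so `-Re⟨ψ, Wψ⟩ ≤ λ ∑_{k≠l} √(μₖ μₗ)`; dividing by `α ≥ λ > 0` finishes the proof.
-/

open scoped BigOperators ComplexConjugate ComplexOrder
open Finset Matrix

noncomputable section

lemma hip_smul_right {ι : Type} [Fintype ι] (f g : ι → ℂ) (c : ℂ) :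
    hip f (c • g) = c * hip f g := by
  simp only [hip_eq_star_dotProduct, dotProduct_smul, smul_eq_mul]

lemma hip_sum_smul_mulVec_sum_smul {ι κ : Type} [Fintype ι] [Fintype κ]
    (W : Matrix ι ι ℂ) (c : κ → ℂ) (v : κ → ι → ℂ) :
    hip (∑ k, c k • v k) (W *ᵥ ∑ l, c l • v l)
      = ∑ k, ∑ l, conj (c k) * c l * hip (v k) (W *ᵥ v l) := by
  simp only [hip_eq_star_dotProduct, mulVec_sum, mulVec_smul, star_sum, star_smul, sum_dotProduct,
    dotProduct_sum, smul_dotProduct, dotProduct_smul, smul_eq_mul, Complex.star_def, mul_sum]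
  rw [sum_comm]
  exact sum_congr rfl fun k _ => sum_congr rfl fun l _ => by ring

lemma neg_sum_mul_mul_le_of_offDiag_ge {κ : Type*} [Fintype κ] [DecidableEq κ]
    (x : κ → ℝ) (hx : ∀ k, 0 ≤ x k) (A : κ → κ → ℝ) (lam : ℝ)
    (hdiag : ∀ k, 0 ≤ A k k) (hoff : ∀ k l, k ≠ l → -lam ≤ A k l) :
    -∑ k, ∑ l, x k * x l * A k l ≤ lam * ∑ k, ∑ l, if k ≠ l then x k * x l else 0 := by
  simp only [← sum_neg_distrib, mul_sum]
  refine sum_le_sum fun k _ => sum_le_sum fun l _ => ?_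
  have hxx : 0 ≤ x k * x l := mul_nonneg (hx k) (hx l)
  by_cases hkl : k = l
  · subst hkl
    simp only [ne_eq, not_true_eq_false, if_false, mul_zero, neg_nonpos]
    exact mul_nonneg hxx (hdiag k)
  · simp only [ne_eq, hkl, not_false_eq_true, if_true]
    nlinarith [mul_le_mul_of_nonneg_left (hoff k l hkl) hxx]

namespace IsSchmidt

variable {m : ℕ} {ψ : Fin m × Fin m → ℂ} {a b : Fin m → Fin m → ℂ} {μ : Fin m → ℝ}

lemma eq_sum_smul_s5 (h : IsSchmidt ψ a b μ) : ψ = ∑ i, (Real.sqrt (μ i) : ℂ) • tp (a i) (b i) := by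
  ext p
  simp only [h.2.2.2.2, Finset.sum_apply, Pi.smul_apply, smul_eq_mul]

lemma re_hip_mulVec (h : IsSchmidt ψ a b μ) (W : Matrix (Fin m × Fin m) (Fin m × Fin m) ℂ) :
    (hip ψ (W *ᵥ ψ)).re
      = ∑ k, ∑ l, Real.sqrt (μ k) * Real.sqrt (μ l) * Acoef W a b k l := by
  rw [h.eq_sum_smul_s5, hip_sum_smul_mulVec_sum_smul, Complex.re_sum]
  refine sum_congr rfl fun k _ => ?_
  rw [Complex.re_sum]
  refine sum_congr rfl fun l _ => ?_
  rw [Complex.conj_ofReal, ← Complex.ofReal_mul, Complex.re_ofReal_mul, Acoef]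

end IsSchmidt

theorem stmt5_general {m : ℕ} (W : Matrix (Fin m × Fin m) (Fin m × Fin m) ℂ)
    (hBP : BlockPos W)
    (lam : ℝ) (hlam : 0 < lam)
    (hA : ∀ (ψ : Fin m × Fin m → ℂ) (a b : Fin m → Fin m → ℂ) (μ : Fin m → ℝ),
      hip ψ ψ = 1 → IsSchmidt ψ a b μ → ∀ k l, k ≠ l → -lam ≤ Acoef W a b k l)
    (α : ℝ) (hα : lam ≤ α) :
    ∀ (ψ : Fin m × Fin m → ℂ) (a b : Fin m → Fin m → ℂ) (μ : Fin m → ℝ),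
      hip ψ ψ = 1 → IsSchmidt ψ a b μ →
      -(hip ψ ((((α : ℂ)⁻¹) • W).mulVec ψ)).re
        ≤ ∑ i, ∑ j, (if i ≠ j then Real.sqrt (μ i * μ j) else 0) := by
  intro ψ a b μ hψ hS
  have hα0 : 0 < α := hlam.trans_le hα
  have hsqrt : ∀ i j, Real.sqrt (μ i * μ j) = Real.sqrt (μ i) * Real.sqrt (μ j) :=
    fun i j => Real.sqrt_mul (hS.2.2.1 i) _
  simp only [hsqrt]
  set S := ∑ i, ∑ j, if i ≠ j then Real.sqrt (μ i) * Real.sqrt (μ j) else 0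
  have hS0 : 0 ≤ S := sum_nonneg fun i _ => sum_nonneg fun j _ => by
    split_ifs <;> positivity
  have hR : -(hip ψ (W *ᵥ ψ)).re ≤ lam * S := by
    rw [hS.re_hip_mulVec]
    exact neg_sum_mul_mul_le_of_offDiag_ge _ (fun _ => Real.sqrt_nonneg _) _ lam
      (fun k => hBP (a k) (b k)) (hA ψ a b μ hψ hS)
  rw [smul_mulVec, hip_smul_right, ← Complex.ofReal_inv, Complex.re_ofReal_mul, ← mul_neg]
  calc α⁻¹ * -(hip ψ (W *ᵥ ψ)).re ≤ α⁻¹ * (α * S) := by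
        gcongr
        exact hR.trans (mul_le_mul_of_nonneg_right hα hS0)
    _ = S := by field_simp

/-- Main theorem: if `W` is a block positive Hermitian matrix and `λ > 0` is
such that `A_{kl}^{(W)}(ψ) ≥ −λ` for every unit vector `ψ`, every Schmidt
decomposition of `ψ` and all `k ≠ l`, then for every `α ≥ λ` the rescaled
witness `α⁻¹W` satisfies `−⟨ψ, (α⁻¹W)ψ⟩ ≤ ∑_{i≠j} √(μᵢ μⱼ)` for every unit
vector `ψ` with Schmidt coefficients `μ`. -/
theorem stmt5 {m : ℕ} (W : Matrix (Fin m × Fin m) (Fin m × Fin m) ℂ)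
    (hW : W.IsHermitian) (hBP : BlockPos W)
    (lam : ℝ) (hlam : 0 < lam)
    (hA : ∀ (ψ : Fin m × Fin m → ℂ) (a b : Fin m → Fin m → ℂ) (μ : Fin m → ℝ),
      hip ψ ψ = 1 → IsSchmidt ψ a b μ → ∀ k l, k ≠ l → -lam ≤ Acoef W a b k l)
    (α : ℝ) (hα : lam ≤ α) :
    ∀ (ψ : Fin m × Fin m → ℂ) (a b : Fin m → Fin m → ℂ) (μ : Fin m → ℝ),
      hip ψ ψ = 1 → IsSchmidt ψ a b μ →
      -(hip ψ ((((α : ℂ)⁻¹) • W).mulVec ψ)).re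
        ≤ ∑ i, ∑ j, (if i ≠ j then Real.sqrt (μ i * μ j) else 0) :=
  stmt5_general W hBP lam hlam hA α hα

end
end

section
/- (Breuer's theorem.) Let W be a block positive Hermitian matrix on ℂ^m⊗ℂ^m such that −⟨ψ, Wψ⟩ ≤ Σ_{i≠j} √(μ_i μ_j) for every unit vector ψ ∈ ℂ^m⊗ℂ^m with Schmidt coefficients μ_i. Let ρ be a density matrix on ℂ^m⊗ℂ^m with Tr(ρW) < 0. Then for every pure-state decomposition ρ = Σ_i p_i |ψ_i⟩⟨ψ_i| (p_i > 0, Σ_i p_i = 1, ψ_i unit vectors), one has Σ_i p_i C(ψ_i) ≥ √(2/(m(m−1))) · |Tr(ρW)|; consequently the convex-roof concurrence satisfies C(ρ) ≥ √(2/(m(m−1))) · |Tr(ρW)|. -/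
open scoped BigOperators ComplexConjugate ComplexOrder
open Finset Matrix

noncomputable section

/-!
A unit vector `ψ` has a Schmidt decomposition whose coefficients `μ` are the eigenvalues of its
reduced matrix `ρ_A`, so `C(ψ)² = 2 (1 - ∑ μᵢ²) = 2 ∑_{i≠j} μᵢ μⱼ`. Cauchy–Schwarz over the
`m(m-1)` off-diagonal pairs gives `∑_{i≠j} √(μᵢ μⱼ) ≤ √(m(m-1)/2) C(ψ)`, so the hypothesis on `W`
becomes `-⟨ψ, Wψ⟩ ≤ √(m(m-1)/2) C(ψ)`. Averaging over a decomposition of `ρ`, for which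
`Tr(ρW) = ∑ pᵢ ⟨ψᵢ, Wψᵢ⟩`, gives the bound; the infimum defining `C(ρ)` is over a nonempty set
because a positive semidefinite matrix is a sum of matrices `v v*`.
-/

theorem hip_eq_inner {ι : Type} [Fintype ι] (f g : ι → ℂ) :
    hip f g = inner ℂ (WithLp.toLp 2 f) (WithLp.toLp 2 g) := by
  simp only [hip, EuclideanSpace.inner_toLp_toLp, dotProduct, Pi.star_apply, mul_comm]
  rfl

theorem onb_iff_orthonormal {m r : ℕ} {a : Fin r → Fin m → ℂ} :
    Onb a ↔ Orthonormal ℂ (fun i => WithLp.toLp 2 (a i)) := by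
  simp only [Onb, orthonormal_iff_ite, hip_eq_inner]

theorem exists_onb_eq_smul_of_pairwise_hip_eq_zero {m : ℕ} {c : Fin m → Fin m → ℂ}
    (hc : Pairwise fun i j => hip (c i) (c j) = 0) :
    ∃ b : Fin m → Fin m → ℂ, Onb b ∧ ∀ i, c i = (√(hip (c i) (c i)).re : ℂ) • b i := by
  obtain ⟨B, hB⟩ : ∃ B : OrthonormalBasis (Fin m) ℂ (EuclideanSpace ℂ (Fin m)),
      ∀ i, c i ≠ 0 → B i = (‖WithLp.toLp 2 (c i)‖⁻¹ : ℂ) • WithLp.toLp 2 (c i) :=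
    ⟨InnerProductSpace.gramSchmidtOrthonormalBasis finrank_euclideanSpace
      (fun i => WithLp.toLp 2 (c i)), fun i hi =>
      InnerProductSpace.gramSchmidtOrthonormalBasis_apply_of_orthogonal _
        (fun i j hij => by simpa only [hip_eq_inner] using hc hij)
        (by rwa [Ne, WithLp.toLp_eq_zero])⟩
  refine ⟨fun i => ⇑(B i), onb_iff_orthonormal.2 (by simp [B.orthonormal]), fun i => ?_⟩
  by_cases hci : c i = 0
  · simp [hci, hip]
  have hnorm : ‖WithLp.toLp 2 (c i)‖ ≠ 0 := by simpa using hci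
  show c i = _ • ⇑(B i)
  have hre : (hip (c i) (c i)).re = ‖WithLp.toLp 2 (c i)‖ ^ 2 := by
    rw [hip_eq_inner]; exact inner_self_eq_norm_sq (𝕜 := ℂ) _
  rw [hB i hci, hre, Real.sqrt_sq (norm_nonneg _), WithLp.ofLp_smul, WithLp.ofLp_toLp,
    smul_smul, mul_inv_cancel₀ (by exact_mod_cast hnorm), one_smul]

theorem Matrix.IsHermitian.trace_mul_self {𝕜 n : Type*} [RCLike 𝕜] [Fintype n] [DecidableEq n]
    {A : Matrix n n 𝕜} (hA : A.IsHermitian) :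
    (A * A).trace = ∑ i, ((hA.eigenvalues i ^ 2 : ℝ) : 𝕜) := by
  set U : Matrix n n 𝕜 := (hA.eigenvectorUnitary : Matrix n n 𝕜)
  set D : Matrix n n 𝕜 := diagonal (RCLike.ofReal ∘ hA.eigenvalues)
  have hUU : star U * U = 1 := Unitary.coe_star_mul_self _
  conv_lhs => rw [hA.spectral_theorem, Unitary.conjStarAlgAut_apply]
  rw [show U * D * star U * (U * D * star U) = U * (D * D) * star U by
    simp only [Matrix.mul_assoc]; rw [← Matrix.mul_assoc (star U), hUU, Matrix.one_mul]]
  rw [trace_mul_cycle, hUU, Matrix.one_mul, diagonal_mul_diagonal, trace_diagonal]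
  simp [sq]

theorem rhoA_eq_mul_conjTranspose {m n : ℕ} (ψ : Fin m × Fin n → ℂ) :
    rhoA ψ = of (Function.curry ψ) * (of (Function.curry ψ))ᴴ := by
  ext x y
  simp [rhoA, mul_apply]

theorem trace_rhoA {m n : ℕ} (ψ : Fin m × Fin n → ℂ) : (rhoA ψ).trace = hip ψ ψ := by
  simp [trace, rhoA, hip, Fintype.sum_prod_type, mul_comm]

theorem exists_isSchmidt {m : ℕ} (ψ : Fin m × Fin m → ℂ) (hψ : hip ψ ψ = 1) :
    ∃ a b μ, IsSchmidt ψ a b μ ∧ ((rhoA ψ * rhoA ψ).trace).re = ∑ i, μ i ^ 2 := by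
  set M := of (Function.curry ψ)
  have hρ : (rhoA ψ).PosSemidef :=
    rhoA_eq_mul_conjTranspose ψ ▸ posSemidef_self_mul_conjTranspose M
  set hH := hρ.isHermitian
  set U : Matrix (Fin m) (Fin m) ℂ := (hH.eigenvectorUnitary : Matrix (Fin m) (Fin m) ℂ)
  set μ := hH.eigenvalues
  set C := star U * M
  have hCC : C * Cᴴ = diagonal (RCLike.ofReal ∘ μ) := calc
    C * Cᴴ = star U * (M * Mᴴ) * U := by
      simp [C, conjTranspose_mul, Matrix.mul_assoc, star_eq_conjTranspose]
    _ = star U * rhoA ψ * U := by rw [rhoA_eq_mul_conjTranspose]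
    _ = _ := by
      rw [← hH.conjStarAlgAut_star_eigenvectorUnitary, Unitary.conjStarAlgAut_star_apply]
  -- The rows of `Uᴴ M` are orthogonal with squared norms `μ i`; normalised, they give `b`.
  set c : Fin m → Fin m → ℂ := fun i z => C i z
  have hc : ∀ i j, hip (c i) (c j) = (C * Cᴴ) j i := by
    simp [c, hip, mul_apply, mul_comm]
  have hcμ : ∀ i, (hip (c i) (c i)).re = μ i := by simp [hc, hCC]
  obtain ⟨b, hb, hcb⟩ := exists_onb_eq_smul_of_pairwise_hip_eq_zero (c := c)
    fun i j hij => by simp only [hc, hCC, diagonal_apply_ne _ hij.symm]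
  have hM : M = U * C := by
    rw [← Matrix.mul_assoc, show U * star U = 1 from Unitary.coe_mul_star_self _, Matrix.one_mul]
  refine ⟨fun i x => U x i, b, μ, ⟨?_, hb, hρ.eigenvalues_nonneg, ?_, ?_⟩, ?_⟩
  · exact onb_iff_orthonormal.2 (by simp [U, hH.eigenvectorBasis.orthonormal])
  · have h := congrArg Complex.re <|
      (hH.trace_eq_sum_eigenvalues).symm.trans ((trace_rhoA ψ).trans hψ)
    simpa using h
  · funext ⟨x, z⟩
    rw [show ψ (x, z) = M x z from rfl, hM, mul_apply]
    refine Finset.sum_congr rfl fun i _ => ?_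
    rw [show C i z = c i z from rfl, hcb i, hcμ]
    simp [tp, mul_left_comm]
  · rw [hH.trace_mul_self, Complex.re_sum]
    rfl

theorem sum_ite_ne_eq_sum_offDiag {ι M : Type*} [Fintype ι] [DecidableEq ι] [AddCommMonoid M]
    (g : ι → ι → M) :
    ∑ i, ∑ j, (if i ≠ j then g i j else 0) = ∑ p ∈ (univ : Finset ι).offDiag, g p.1 p.2 := by
  rw [← sum_product', ← sum_filter]
  congr 1
  ext p
  simp [mem_offDiag]

theorem sq_sum_eq_sum_sq_add_sum_offDiag {ι R : Type*} [DecidableEq ι] [CommSemiring R]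
    (s : Finset ι) (f : ι → R) :
    (∑ i ∈ s, f i) ^ 2 = ∑ i ∈ s, f i ^ 2 + ∑ p ∈ s.offDiag, f p.1 * f p.2 := by
  rw [sq, sum_mul_sum, ← sum_product', ← diag_union_offDiag, sum_union (disjoint_diag_offDiag s),
    Finset.diag, sum_map]
  simp [sq]

theorem Real.sum_sqrt_le_sqrt_card_mul_sum {ι : Type*} (s : Finset ι) {f : ι → ℝ}
    (hf : ∀ i, 0 ≤ f i) : ∑ i ∈ s, √(f i) ≤ √(#s * ∑ i ∈ s, f i) := by
  simpa [Real.sqrt_mul (Nat.cast_nonneg _)] using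
    Real.sum_sqrt_mul_sqrt_le s (fun _ => zero_le_one) hf

theorem card_offDiag_univ_fin (m : ℕ) :
    ((univ : Finset (Fin m)).offDiag.card : ℝ) = m * (m - 1) := by
  rw [offDiag_card, card_univ, Fintype.card_fin, Nat.cast_sub (Nat.le_mul_self m)]
  push_cast
  ring

theorem concP_eq_sqrt_two_mul_sum_offDiag {m : ℕ} {ψ : Fin m × Fin m → ℂ} {μ : Fin m → ℝ}
    (hμ : ∑ i, μ i = 1) (htr : ((rhoA ψ * rhoA ψ).trace).re = ∑ i, μ i ^ 2) :
    concP ψ = √(2 * ∑ p ∈ (univ : Finset (Fin m)).offDiag, μ p.1 * μ p.2) := by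
  have h := sq_sum_eq_sum_sq_add_sum_offDiag univ μ
  rw [hμ] at h
  rw [concP, htr]
  congr 2
  linarith

def IsSchmidtBounded {m : ℕ} (W : Matrix (Fin m × Fin m) (Fin m × Fin m) ℂ) : Prop :=
  ∀ (ψ : Fin m × Fin m → ℂ) (a b : Fin m → Fin m → ℂ) (μ : Fin m → ℝ),
    hip ψ ψ = 1 → IsSchmidt ψ a b μ →
      -(hip ψ (W *ᵥ ψ)).re ≤ ∑ i, ∑ j, (if i ≠ j then √(μ i * μ j) else 0)

theorem IsSchmidtBounded.sqrt_two_div_mul_neg_re_hip_le_concP {m : ℕ}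
    {W : Matrix (Fin m × Fin m) (Fin m × Fin m) ℂ}
    (hW : IsSchmidtBounded W) {ψ : Fin m × Fin m → ℂ} (hψ : hip ψ ψ = 1) :
    √(2 / (m * (m - 1))) * -(hip ψ (W *ᵥ ψ)).re ≤ concP ψ := by
  obtain ⟨a, b, μ, hS, htr⟩ := exists_isSchmidt ψ hψ
  have hμ : ∀ i, 0 ≤ μ i := hS.2.2.1
  set K : ℝ := m * (m - 1)
  set S := ∑ p ∈ (univ : Finset (Fin m)).offDiag, μ p.1 * μ p.2
  have hcard : (#(univ : Finset (Fin m)).offDiag : ℝ) = K := card_offDiag_univ_fin m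
  have hK : 0 ≤ K := hcard ▸ Nat.cast_nonneg _
  calc √(2 / K) * -(hip ψ (W *ᵥ ψ)).re
      ≤ √(2 / K) * ∑ p ∈ (univ : Finset (Fin m)).offDiag, √(μ p.1 * μ p.2) := by
        gcongr
        simpa only [sum_ite_ne_eq_sum_offDiag] using hW ψ a b μ hψ hS
    _ ≤ √(2 / K) * √(K * S) := by
        gcongr
        rw [← hcard]
        exact Real.sum_sqrt_le_sqrt_card_mul_sum _ fun p => mul_nonneg (hμ _) (hμ _)
    _ = √(2 / K * K * S) := by
        rw [mul_assoc (2 / K) K S, Real.sqrt_mul (div_nonneg zero_le_two hK)]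
    _ ≤ √(2 * S) := by
        -- `K = 0` when `m ≤ 1`, and then `2 / K = 0`.
        rcases eq_or_ne K 0 with h | h
        · simp [h]
        · rw [div_mul_cancel₀ _ h]
    _ = concP ψ := (concP_eq_sqrt_two_mul_sum_offDiag hS.2.2.2.1 htr).symm

theorem trace_vecMulVec_star_mul {ι : Type} [Fintype ι] (ψ : ι → ℂ) (W : Matrix ι ι ℂ) :
    (vecMulVec ψ (star ψ) * W).trace = hip ψ (W *ᵥ ψ) := by
  rw [vecMulVec_mul, trace_vecMulVec, dotProduct_comm, ← dotProduct_mulVec]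
  rfl

theorem re_trace_mul_eq_sum_of_eq_sum_smul {ι : Type} [Fintype ι] {N : ℕ} {ρ : Matrix ι ι ℂ}
    {p : Fin N → ℝ} {ψ : Fin N → ι → ℂ} (hρ : ρ = ∑ i, (p i : ℂ) • vecMulVec (ψ i) (star (ψ i)))
    (W : Matrix ι ι ℂ) : (ρ * W).trace.re = ∑ i, p i * (hip (ψ i) (W *ᵥ ψ i)).re := by
  simp [hρ, sum_mul, trace_sum, trace_vecMulVec_star_mul]

theorem Fin.exists_ne_zero_sum_comp_eq {V M : Type*} [Zero V] [AddCommMonoid M] {g : V → M}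
    (hg : g 0 = 0) {n : ℕ} (v : Fin n → V) :
    ∃ (N : ℕ) (w : Fin N → V), (∀ i, w i ≠ 0) ∧ ∑ i, g (v i) = ∑ i, g (w i) := by
  induction n with
  | zero => exact ⟨0, v, finZeroElim, rfl⟩
  | succ n ih =>
    obtain ⟨N, w, hw, hsum⟩ := ih (fun i => v i.succ)
    rw [Fin.sum_univ_succ]
    by_cases h0 : v 0 = 0
    · exact ⟨N, w, hw, by simpa [h0, hg] using hsum⟩
    · exact ⟨N + 1, Fin.cons (v 0) w, Fin.cases h0 hw, by simp [Fin.sum_univ_succ, hsum]⟩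

theorem exists_vecMulVec_eq_smul_of_ne_zero {ι : Type} [Fintype ι] {v : ι → ℂ} (hv : v ≠ 0) :
    ∃ r : ℝ, 0 < r ∧ ∃ ψ, hip ψ ψ = 1 ∧ vecMulVec v (star v) = (r : ℂ) • vecMulVec ψ (star ψ) := by
  set x := WithLp.toLp 2 v
  have hx : x ≠ 0 := by simpa [x] using hv
  refine ⟨‖x‖ ^ 2, by positivity, (‖x‖⁻¹ : ℂ) • v, ?_, ?_⟩
  · rw [hip_eq_inner, WithLp.toLp_smul]
    exact inner_self_eq_one_of_norm_eq_one (norm_smul_inv_norm hx)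
  · have : (‖x‖ : ℂ) ≠ 0 := by simpa using hx
    ext i j
    simp [vecMulVec_apply]
    field_simp

theorem exists_pure_state_decomposition {ι : Type} [Fintype ι] {ρ : Matrix ι ι ℂ}
    (hρ : ρ.PosSemidef) (htr : ρ.trace = 1) :
    ∃ (N : ℕ) (p : Fin N → ℝ) (ψ : Fin N → ι → ℂ), (∀ i, 0 < p i) ∧ ∑ i, p i = 1 ∧
      (∀ i, hip (ψ i) (ψ i) = 1) ∧ ρ = ∑ i, (p i : ℂ) • vecMulVec (ψ i) (star (ψ i)) := by
  obtain ⟨n, v, hv⟩ := posSemidef_iff_eq_sum_vecMulVec.1 hρ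
  obtain ⟨N, w, hw, hsum⟩ :=
    Fin.exists_ne_zero_sum_comp_eq (g := fun v : ι → ℂ => vecMulVec v (star v)) (by simp) v
  choose p hp ψ hψ hwψ using fun i => exists_vecMulVec_eq_smul_of_ne_zero (hw i)
  have hρψ : ρ = ∑ i, (p i : ℂ) • vecMulVec (ψ i) (star (ψ i)) :=
    hv.trans (hsum.trans (sum_congr rfl fun i _ => hwψ i))
  refine ⟨N, p, ψ, hp, ?_, hψ, hρψ⟩
  classical
  simpa [hψ, htr] using (re_trace_mul_eq_sum_of_eq_sum_smul hρψ 1).symm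

theorem IsSchmidtBounded.sqrt_two_div_mul_abs_re_trace_mul_le_sum_concP {m N : ℕ}
    {W : Matrix (Fin m × Fin m) (Fin m × Fin m) ℂ}
    (hW : IsSchmidtBounded W) {ρ : Matrix (Fin m × Fin m) (Fin m × Fin m) ℂ}
    (hneg : (ρ * W).trace.re < 0)
    {p : Fin N → ℝ} {ψ : Fin N → Fin m × Fin m → ℂ} (hp : ∀ i, 0 ≤ p i)
    (hψ : ∀ i, hip (ψ i) (ψ i) = 1) (hρ : ρ = ∑ i, (p i : ℂ) • vecMulVec (ψ i) (star (ψ i))) :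
    √(2 / (m * (m - 1))) * |(ρ * W).trace.re| ≤ ∑ i, p i * concP (ψ i) := by
  rw [abs_of_neg hneg, re_trace_mul_eq_sum_of_eq_sum_smul hρ, ← sum_neg_distrib, mul_sum]
  refine sum_le_sum fun i _ => ?_
  calc √(2 / (m * (m - 1))) * -(p i * (hip (ψ i) (W *ᵥ ψ i)).re)
      = p i * (√(2 / (m * (m - 1))) * -(hip (ψ i) (W *ᵥ ψ i)).re) := by ring
    _ ≤ p i * concP (ψ i) :=
      mul_le_mul_of_nonneg_left (hW.sqrt_two_div_mul_neg_re_hip_le_concP (hψ i)) (hp i)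

theorem le_concM_of_forall_le {m n : ℕ} {ρ : Matrix (Fin m × Fin n) (Fin m × Fin n) ℂ} {c : ℝ}
    (hρ : ρ.PosSemidef) (htr : ρ.trace = 1)
    (h : ∀ (N : ℕ) (p : Fin N → ℝ) (ψ : Fin N → (Fin m × Fin n → ℂ)),
      (∀ i, 0 < p i) → ∑ i, p i = 1 → (∀ i, hip (ψ i) (ψ i) = 1) →
      ρ = ∑ i, (p i : ℂ) • vecMulVec (ψ i) (star (ψ i)) → c ≤ ∑ i, p i * concP (ψ i)) :
    c ≤ concM ρ := by
  refine le_csInf ?_ ?_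
  · obtain ⟨N, p, ψ, hp, hsum, hψ, hdecomp⟩ := exists_pure_state_decomposition hρ htr
    exact ⟨_, N, p, ψ, hp, hsum, hψ, hdecomp, rfl⟩
  · rintro _ ⟨N, p, ψ, hp, hsum, hψ, hdecomp, rfl⟩
    exact h N p ψ hp hsum hψ hdecomp

theorem stmt7_general {m : ℕ} (W : Matrix (Fin m × Fin m) (Fin m × Fin m) ℂ)
    (hcond : ∀ (ψ : Fin m × Fin m → ℂ) (a b : Fin m → Fin m → ℂ) (μ : Fin m → ℝ),
      hip ψ ψ = 1 → IsSchmidt ψ a b μ →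
      -(hip ψ (W.mulVec ψ)).re
        ≤ ∑ i, ∑ j, (if i ≠ j then Real.sqrt (μ i * μ j) else 0))
    (ρ : Matrix (Fin m × Fin m) (Fin m × Fin m) ℂ)
    (hρ : ρ.PosSemidef) (hρtr : ρ.trace = 1)
    (hdet : (Matrix.trace (ρ * W)).re < 0) :
    (∀ (N : ℕ) (p : Fin N → ℝ) (ψ : Fin N → (Fin m × Fin m → ℂ)),
      (∀ i, 0 < p i) → ∑ i, p i = 1 → (∀ i, hip (ψ i) (ψ i) = 1) →
      ρ = ∑ i, (p i : ℂ) • Matrix.of (fun x y => ψ i x * conj (ψ i y)) →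
      Real.sqrt (2 / ((m : ℝ) * ((m : ℝ) - 1))) * |(Matrix.trace (ρ * W)).re|
        ≤ ∑ i, p i * concP (ψ i)) ∧
    Real.sqrt (2 / ((m : ℝ) * ((m : ℝ) - 1))) * |(Matrix.trace (ρ * W)).re|
      ≤ concM ρ := by
  refine ⟨?_, le_concM_of_forall_le hρ hρtr ?_⟩ <;>
  exact fun _ _ _ hp _ hψ hdecomp =>
    IsSchmidtBounded.sqrt_two_div_mul_abs_re_trace_mul_le_sum_concP hcond hdet
      (fun i => (hp i).le) hψ hdecomp

/-- Breuer's theorem: if the block positive Hermitian witness `W` satisfies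
`−⟨ψ, Wψ⟩ ≤ ∑_{i≠j} √(μᵢμⱼ)` for every unit vector with Schmidt coefficients
`μ`, and `ρ` is a density matrix with `Tr(ρW) < 0`, then every pure-state
decomposition of `ρ` satisfies
`∑ᵢ pᵢ C(ψᵢ) ≥ √(2/(m(m−1))) |Tr(ρW)|`, and hence
`C(ρ) ≥ √(2/(m(m−1))) |Tr(ρW)|`. -/
theorem stmt7 {m : ℕ} (W : Matrix (Fin m × Fin m) (Fin m × Fin m) ℂ)
    (hW : W.IsHermitian) (hBP : BlockPos W)
    (hcond : ∀ (ψ : Fin m × Fin m → ℂ) (a b : Fin m → Fin m → ℂ) (μ : Fin m → ℝ),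
      hip ψ ψ = 1 → IsSchmidt ψ a b μ →
      -(hip ψ (W.mulVec ψ)).re
        ≤ ∑ i, ∑ j, (if i ≠ j then Real.sqrt (μ i * μ j) else 0))
    (ρ : Matrix (Fin m × Fin m) (Fin m × Fin m) ℂ)
    (hρ : ρ.PosSemidef) (hρtr : ρ.trace = 1)
    (hdet : (Matrix.trace (ρ * W)).re < 0) :
    (∀ (N : ℕ) (p : Fin N → ℝ) (ψ : Fin N → (Fin m × Fin m → ℂ)),
      (∀ i, 0 < p i) → ∑ i, p i = 1 → (∀ i, hip (ψ i) (ψ i) = 1) →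
      ρ = ∑ i, (p i : ℂ) • Matrix.of (fun x y => ψ i x * conj (ψ i y)) →
      Real.sqrt (2 / ((m : ℝ) * ((m : ℝ) - 1))) * |(Matrix.trace (ρ * W)).re|
        ≤ ∑ i, p i * concP (ψ i)) ∧
    Real.sqrt (2 / ((m : ℝ) * ((m : ℝ) - 1))) * |(Matrix.trace (ρ * W)).re|
      ≤ concM ρ :=
  stmt7_general W hcond ρ hρ hρtr hdet

end
end

section
/- Let d ≥ 3, γ > 0, 1 ≤ k ≤ d−2, and let ρ_γ = (1/N_γ) Σ_{i,j=1}^d |i⟩⟨j| ⊗ A_{ij}^γ on ℂ^d⊗ℂ^d, where A_{ij}^γ = |i⟩⟨j| for i ≠ j, A_{11}^γ = |1⟩⟨1| + a_γ|2⟩⟨2| + Σ_{ℓ=3}^{d−1}|ℓ⟩⟨ℓ| + b_γ|d⟩⟨d|, A_{jj}^γ = S^{j−1} A_{11}^γ S^{†(j−1)} with S|k⟩ = |k+1⟩ (mod d), a_γ = (γ² + d − 1)/d, b_γ = (γ^{-2} + d − 1)/d, and N_γ = d² − 2 + γ² + γ^{-2}. Let W_{d,k} = Σ_{i,j=1}^d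 |i⟩⟨j| ⊗ X_{ij}^{d,k}, where X_{ii}^{d,k} = (d−k−1)|i⟩⟨i| + Σ_{ℓ=1}^k |i+ℓ⟩⟨i+ℓ| (mod d) and X_{ij}^{d,k} = −|i⟩⟨j| for i ≠ j. Then Tr(W_{d,k} ρ_γ) = (γ² − 1)/(d² − 2 + γ² + γ^{-2}); in particular W_{d,k} detects ρ_γ exactly when 0 < γ < 1. -/
/-!
Blockwise, `Tr(W ρ_γ) = N_γ⁻¹ ∑_{i,j} Tr(X_{ij} A_{ji})`. Each of the `d(d−1)` off-diagonal pairs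
contributes `Tr(−|i⟩⟨j| |j⟩⟨i|) = −1`. A diagonal block `X_{ii}` reads the diagonal of `A_{ii}`
at `i, i+1, …, i+k`, where (as `k ≤ d−2`) it meets `a_γ` once and never `b_γ`, giving
`(d−k−1) + a_γ + (k−1)`. Summing, `d(d−2+a_γ) − d(d−1) = γ² − 1`.
-/

open scoped BigOperators ComplexConjugate ComplexOrder
open Finset Matrix

noncomputable section

/-- Diagonal of the block `A₁₁^γ = |1⟩⟨1| + a_γ|2⟩⟨2| + ∑_{ℓ=3}^{d−1}|ℓ⟩⟨ℓ| + b_γ|d⟩⟨d|`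
(0-based: entry `1` carries `a_γ = (γ²+d−1)/d`, entry `d−1` carries
`b_γ = (γ⁻²+d−1)/d`, all other entries are `1`). -/
def cDiag (d : ℕ) (γ : ℝ) : Fin d → ℝ :=
  fun t => if (t : ℕ) = 1 then (γ ^ 2 + (d : ℝ) - 1) / (d : ℝ)
    else if (t : ℕ) = d - 1 then (γ⁻¹ ^ 2 + (d : ℝ) - 1) / (d : ℝ) else 1

/-- The blocks `A_{ij}^γ`: `A_{ij}^γ = |i⟩⟨j|` for `i ≠ j`, and
`A_{jj}^γ = S^j A₀₀^γ S^{†j}` with `S` the cyclic shift, i.e.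
`(A_{jj}^γ)_{x,y} = (A₀₀^γ)_{x−j,y−j}` (indices mod `d`). -/
def Ablk (d : ℕ) [NeZero d] (γ : ℝ) : Fin d → Fin d → Matrix (Fin d) (Fin d) ℂ :=
  fun i j =>
    if i = j then
      Matrix.of fun x y => if x = y then ((cDiag d γ (x - i) : ℝ) : ℂ) else 0
    else Matrix.single i j 1

/-- The state `ρ_γ = (1/N_γ) ∑_{i,j} |i⟩⟨j| ⊗ A_{ij}^γ`,
`N_γ = d² − 2 + γ² + γ⁻²`. -/
def rhoGam (d : ℕ) [NeZero d] (γ : ℝ) : Matrix (Fin d × Fin d) (Fin d × Fin d) ℂ :=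
  (((((d : ℝ) ^ 2 - 2 + γ ^ 2 + γ⁻¹ ^ 2)⁻¹ : ℝ)) : ℂ) •
    Matrix.of fun p q => Ablk d γ p.1 q.1 p.2 q.2

/-- The blocks `X_{ij}^{d,k}`: `X_{ii}^{d,k} = (d−k−1)|i⟩⟨i| + ∑_{ℓ=1}^k |i+ℓ⟩⟨i+ℓ|`
(mod `d`) and `X_{ij}^{d,k} = −|i⟩⟨j|` for `i ≠ j`. -/
def Xblk (d k : ℕ) [NeZero d] : Fin d → Fin d → Matrix (Fin d) (Fin d) ℂ :=
  fun i j =>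
    if i = j then
      ((((d : ℝ) - (k : ℝ) - 1 : ℝ)) : ℂ) • Matrix.single i i 1
        + ∑ ℓ ∈ Finset.Icc 1 k,
            Matrix.single (i + (Fin.ofNat d ℓ)) (i + (Fin.ofNat d ℓ)) 1
    else -Matrix.single i j 1

/-- The witness `W_{d,k} = ∑_{i,j} |i⟩⟨j| ⊗ X_{ij}^{d,k}`. -/
def Wdk (d k : ℕ) [NeZero d] : Matrix (Fin d × Fin d) (Fin d × Fin d) ℂ :=
  Matrix.of fun p q => Xblk d k p.1 q.1 p.2 q.2

theorem Matrix.trace_of_blocks_mul {m n R : Type*} [Fintype m] [Fintype n] [CommSemiring R]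
    (X A : m → m → Matrix n n R) :
    trace ((of fun p q : m × n => X p.1 q.1 p.2 q.2) * of fun p q => A p.1 q.1 p.2 q.2)
      = ∑ i, ∑ j, trace (X i j * A j i) := by
  simp only [trace, diag_apply, mul_apply, of_apply, Fintype.sum_prod_type]
  exact Finset.sum_congr rfl fun i _ => Finset.sum_comm

lemma Ablk_self (d : ℕ) [NeZero d] (γ : ℝ) (i : Fin d) :
    Ablk d γ i i = diagonal fun x => ((cDiag d γ (x - i) : ℝ) : ℂ) := by
  ext x y
  simp [Ablk, diagonal]

lemma cDiag_zero {d : ℕ} [NeZero d] (hd : 2 ≤ d) (γ : ℝ) : cDiag d γ 0 = 1 := by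
  simp [cDiag]
  omega

lemma cDiag_ofNat {d ℓ : ℕ} [NeZero d] (h1 : 1 ≤ ℓ) (h2 : ℓ ≤ d - 2) (γ : ℝ) :
    cDiag d γ (Fin.ofNat d ℓ) = if ℓ = 1 then (γ ^ 2 + (d : ℝ) - 1) / d else 1 := by
  have hval : ((Fin.ofNat d ℓ : Fin d) : ℕ) = ℓ := by
    rw [Fin.val_ofNat, Nat.mod_eq_of_lt (by omega)]
  simp only [cDiag, hval]
  split_ifs <;> first | rfl | omega

lemma sum_cDiag_Icc {d k : ℕ} [NeZero d] (hk1 : 1 ≤ k) (hk2 : k ≤ d - 2) (γ : ℝ) :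
    ∑ ℓ ∈ Icc 1 k, cDiag d γ (Fin.ofNat d ℓ) = (γ ^ 2 + (d : ℝ) - 1) / d + (k - 1) := by
  have hrest : ∀ ℓ ∈ Ioc 1 k, cDiag d γ (Fin.ofNat d ℓ) = 1 := by
    intro ℓ hℓ
    rw [mem_Ioc] at hℓ
    rw [cDiag_ofNat hℓ.1.le (by omega), if_neg hℓ.1.ne']
  rw [Icc_eq_cons_Ioc hk1, sum_cons, cDiag_ofNat le_rfl (by omega), if_pos rfl,
    sum_congr rfl hrest, sum_const, Nat.card_Ioc, nsmul_one, Nat.cast_sub hk1, Nat.cast_one]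

lemma trace_Xblk_mul_Ablk_of_ne (d k : ℕ) [NeZero d] (γ : ℝ) {i j : Fin d} (h : i ≠ j) :
    trace (Xblk d k i j * Ablk d γ j i) = -1 := by
  simp [Xblk, Ablk, h, h.symm]

lemma trace_Xblk_mul_Ablk_self {d k : ℕ} [NeZero d] (hk1 : 1 ≤ k) (hk2 : k ≤ d - 2)
    (γ : ℝ) (i : Fin d) :
    trace (Xblk d k i i * Ablk d γ i i)
      = (((d : ℝ) - 2 + (γ ^ 2 + (d : ℝ) - 1) / d : ℝ) : ℂ) := by
  rw [Xblk, if_pos rfl, Ablk_self]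
  simp only [add_mul, smul_mul_assoc, sum_mul, trace_add, trace_smul, trace_sum,
    trace_single_mul, diagonal_apply_eq, sub_self, add_sub_cancel_left, smul_eq_mul, one_mul]
  rw [cDiag_zero (by omega), ← Complex.ofReal_sum, sum_cDiag_Icc hk1 hk2]
  push_cast
  ring

lemma trace_Xblk_mul_Ablk {d k : ℕ} [NeZero d] (hk1 : 1 ≤ k) (hk2 : k ≤ d - 2)
    (γ : ℝ) (i j : Fin d) :
    trace (Xblk d k i j * Ablk d γ j i)
      = if i = j then (((d : ℝ) - 2 + (γ ^ 2 + (d : ℝ) - 1) / d : ℝ) : ℂ) else -1 := by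
  split_ifs with h
  · subst h
    exact trace_Xblk_mul_Ablk_self hk1 hk2 γ i
  · exact trace_Xblk_mul_Ablk_of_ne d k γ h

lemma Fintype.sum_ite_eq_else_const {ι M : Type*} [Fintype ι] [DecidableEq ι] [AddCommMonoid M]
    (i : ι) (a b : M) :
    ∑ j, (if i = j then a else b) = a + (Fintype.card ι - 1) • b := by
  have hoff : ∀ j ∈ ({i}ᶜ : Finset ι), (if i = j then a else b) = b := fun j hj =>
    if_neg fun h => mem_compl.1 hj (mem_singleton.2 h.symm)
  rw [Fintype.sum_eq_add_sum_compl i, if_pos rfl, Finset.sum_congr rfl hoff, Finset.sum_const,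
    card_compl, card_singleton]

theorem stmt17_general (d k : ℕ) [NeZero d] (hk1 : 1 ≤ k) (hk2 : k ≤ d - 2)
    (γ : ℝ) (hγ : 0 < γ) :
    Matrix.trace (Wdk d k * rhoGam d γ)
      = (((γ ^ 2 - 1) / ((d : ℝ) ^ 2 - 2 + γ ^ 2 + γ⁻¹ ^ 2) : ℝ) : ℂ) ∧
    ((Matrix.trace (Wdk d k * rhoGam d γ)).re < 0 ↔ γ < 1) := by
  have hd : (2 : ℝ) ≤ d := by exact_mod_cast (by omega : 2 ≤ d)
  have hN : 0 < (d : ℝ) ^ 2 - 2 + γ ^ 2 + γ⁻¹ ^ 2 := by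
    nlinarith [sq_nonneg γ, sq_nonneg γ⁻¹]
  have htrace : trace (Wdk d k * rhoGam d γ)
      = (((γ ^ 2 - 1) / ((d : ℝ) ^ 2 - 2 + γ ^ 2 + γ⁻¹ ^ 2) : ℝ) : ℂ) := by
    rw [rhoGam, Matrix.mul_smul, trace_smul, Wdk, trace_of_blocks_mul]
    simp only [trace_Xblk_mul_Ablk hk1 hk2, Fintype.sum_ite_eq_else_const, sum_const, card_univ,
      Fintype.card_fin]
    rw [smul_eq_mul, nsmul_eq_mul, nsmul_eq_mul, Nat.cast_sub (by omega : 1 ≤ d)]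
    have hd0 : (d : ℂ) ≠ 0 := NeZero.ne _
    push_cast
    rw [inv_mul_eq_div]
    congr 1
    field_simp
    ring
  refine ⟨htrace, ?_⟩
  rw [htrace, Complex.ofReal_re, div_lt_iff₀ hN, zero_mul, sub_neg, sq_lt_one_iff₀ hγ.le]

/-- `Tr(W_{d,k} ρ_γ) = (γ² − 1)/(d² − 2 + γ² + γ⁻²)`; in particular `W_{d,k}`
detects `ρ_γ` exactly when `0 < γ < 1`. -/
theorem stmt17 (d k : ℕ) [NeZero d] (hd : 3 ≤ d) (hk1 : 1 ≤ k) (hk2 : k ≤ d - 2)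
    (γ : ℝ) (hγ : 0 < γ) :
    Matrix.trace (Wdk d k * rhoGam d γ)
      = (((γ ^ 2 - 1) / ((d : ℝ) ^ 2 - 2 + γ ^ 2 + γ⁻¹ ^ 2) : ℝ) : ℂ) ∧
    ((Matrix.trace (Wdk d k * rhoGam d γ)).re < 0 ↔ γ < 1) :=
  stmt17_general d k hk1 hk2 γ hγ

end
end

section
/- Let 0 < b < 1, let ρ(b) be the 2⊗4 Horodecki state and W(u) the 8×8 witness family (as specified), so that Tr(W(u)ρ(b)) = (3 − 3b − 6u√(1−b²) + 3u² + 2bu²)/(6 + 42b). Then for real u, Tr(W(u) ρ(b)) < 0 if and only if u₁ < u < u₂', where u₁ = (3√(1−b²) − √(3b(1−b)))/(3+2b) and u₂' = (3√(1−b²) + √(3b(1−b)))/(3+2b); equivalently, Tr(W(u)ρ(b)) < 0 iff (3+2b)u² − 6√(1−b²)u + 3(1−b) < 0. -/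
open scoped BigOperators ComplexConjugate ComplexOrder
open Finset Matrix

noncomputable section

/-- The 2⊗4 Horodecki state `ρ(b)` on `ℂ²⊗ℂ⁴`, written as an 8×8 matrix in the
product basis ordered `(1,1),(1,2),(1,3),(1,4),(2,1),(2,2),(2,3),(2,4)`. -/
def rhoB (b : ℝ) : Matrix (Fin 8) (Fin 8) ℂ :=
  (((7 * b + 1)⁻¹ : ℝ) : ℂ) •
  !![(b : ℂ), 0, 0, 0, 0, (b : ℂ), 0, 0;
     0, (b : ℂ), 0, 0, 0, 0, (b : ℂ), 0;
     0, 0, (b : ℂ), 0, 0, 0, 0, (b : ℂ);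
     0, 0, 0, (b : ℂ), 0, 0, 0, 0;
     0, 0, 0, 0, (((1 + b) / 2 : ℝ) : ℂ), 0, 0, ((Real.sqrt (1 - b ^ 2) / 2 : ℝ) : ℂ);
     (b : ℂ), 0, 0, 0, 0, (b : ℂ), 0, 0;
     0, (b : ℂ), 0, 0, 0, 0, (b : ℂ), 0;
     0, 0, (b : ℂ), 0, ((Real.sqrt (1 - b ^ 2) / 2 : ℝ) : ℂ), 0, 0, (((1 + b) / 2 : ℝ) : ℂ)]

/-- The witness family `W(u)` on `ℂ²⊗ℂ⁴` (Tang map), written as an 8×8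
Hermitian matrix in the same product basis. -/
def Wu (u : ℝ) : Matrix (Fin 8) (Fin 8) ℂ :=
  !![((1 - u ^ 2 / 6 : ℝ) : ℂ), 0, 0, 0, 0, -1, 0, 0;
     0, 1, 0, 0, 0, 0, -2, 0;
     0, 0, 2, 0, (u : ℂ), 0, 0, -2;
     0, 0, 0, 1, 0, 0, 0, 0;
     0, 0, (u : ℂ), 0, ((u ^ 2 : ℝ) : ℂ), 0, 0, ((-u : ℝ) : ℂ);
     -1, 0, 0, 0, 0, 2, 0, 0;
     0, -2, 0, 0, 0, 0, 2, 0;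
     0, 0, -2, 0, ((-u : ℝ) : ℂ), 0, 0, 1]

theorem quadratic_neg_iff_between_roots {a p c r x : ℝ} (ha : 0 < a) (hr : 0 ≤ r)
    (hdisc : r ^ 2 = p ^ 2 - a * c) :
    a * x ^ 2 - 2 * p * x + c < 0 ↔ (p - r) / a < x ∧ x < (p + r) / a := by
  have factor : a * (a * x ^ 2 - 2 * p * x + c) = (a * x - (p - r)) * (a * x - (p + r)) := by
    linear_combination hdisc
  rw [← mul_lt_mul_iff_of_pos_left ha, mul_zero, factor, mul_neg_iff, div_lt_iff₀' ha,
    lt_div_iff₀' ha]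
  constructor
  · rintro (⟨h₁, h₂⟩ | ⟨h₁, h₂⟩) <;> constructor <;> linarith
  · rintro ⟨h₁, h₂⟩
    exact Or.inl ⟨by linarith, by linarith⟩

theorem trace_Wu_mul_rhoB (b u : ℝ) (hb : 7 * b + 1 ≠ 0) :
    trace (Wu u * rhoB b) =
      ((((3 + 2 * b) * u ^ 2 - 6 * Real.sqrt (1 - b ^ 2) * u + 3 * (1 - b)) /
        (6 * (7 * b + 1)) : ℝ) : ℂ) := by
  have hb' : (7 * b + 1 : ℂ) ≠ 0 := by exact_mod_cast hb
  simp [Wu, rhoB, trace, Fin.sum_univ_succ]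
  field_simp
  ring

/-- For real `u`, `Tr(W(u) ρ(b)) < 0` iff `u₁ < u < u₂'`, with
`u₁ = (3√(1−b²) − √(3b(1−b)))/(3+2b)` and
`u₂' = (3√(1−b²) + √(3b(1−b)))/(3+2b)`; equivalently
`Tr(W(u)ρ(b)) < 0` iff `(3+2b)u² − 6√(1−b²)u + 3(1−b) < 0`. -/
theorem stmt19 (b : ℝ) (hb0 : 0 < b) (hb1 : b < 1) (u : ℝ) :
    ((Matrix.trace (Wu u * rhoB b)).re < 0 ↔
      ((3 * Real.sqrt (1 - b ^ 2) - Real.sqrt (3 * b * (1 - b))) / (3 + 2 * b) < u ∧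
        u < (3 * Real.sqrt (1 - b ^ 2) + Real.sqrt (3 * b * (1 - b))) / (3 + 2 * b))) ∧
    ((Matrix.trace (Wu u * rhoB b)).re < 0 ↔
      (3 + 2 * b) * u ^ 2 - 6 * Real.sqrt (1 - b ^ 2) * u + 3 * (1 - b) < 0) := by
  set s := Real.sqrt (1 - b ^ 2)
  set r := Real.sqrt (3 * b * (1 - b))
  have hs : s ^ 2 = 1 - b ^ 2 := Real.sq_sqrt (by nlinarith)
  have hr : r ^ 2 = 3 * b * (1 - b) := Real.sq_sqrt (by nlinarith)
  have sign : (trace (Wu u * rhoB b)).re < 0 ↔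
      (3 + 2 * b) * u ^ 2 - 6 * s * u + 3 * (1 - b) < 0 := by
    rw [trace_Wu_mul_rhoB b u (by linarith), Complex.ofReal_re, div_lt_iff₀ (by positivity),
      zero_mul]
  have roots : (3 + 2 * b) * u ^ 2 - 6 * s * u + 3 * (1 - b) < 0 ↔
      (3 * s - r) / (3 + 2 * b) < u ∧ u < (3 * s + r) / (3 + 2 * b) := by
    rw [show 6 * s * u = 2 * (3 * s) * u by ring]
    -- the reduced discriminant `(3s)² − (3+2b)·3(1−b)` equals `3b(1−b) = r²`
    exact quadratic_neg_iff_between_roots (by linarith) (Real.sqrt_nonneg _)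
      (by linear_combination hr - 9 * hs)
  exact ⟨sign.trans roots, sign⟩

end
end
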